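/- Let ν be the involutive automorphism of lie_2 with ν(x) = −x−y, ν(y) = y. For any E_{a,b} ∈ sder_2, the conjugate ν ∘ E_{a,b} ∘ ν equals the Ihara derivation d_{ν(b)} (defined by x ↦ 0, y ↦ [y, ν(b)]), and d_{ν(b)}(−x−y) = [−x−y, ν(a)], so d_{ν(b)} ∈ ider_2. The resulting map E_{a,b} ↦ d_{ν(b)} is an isomorphism of Lie algebras sder_2 → ider_2 (both with the commutator bracket of derivations). -/

import Mathlib

noncomputable section

attribute [local instance 100] LieRing.ofAssociativeRing

abbrev Ass2 : Type := MonoidAlgebra ℚ (FreeMonoid (Fin 2))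

def mono (w : List (Fin 2)) : Ass2 := MonoidAlgebra.single (FreeMonoid.ofList w) 1

def Xg : Ass2 := mono [0]
def Yg : Ass2 := mono [1]

def coeffW (f : Ass2) (w : List (Fin 2)) : ℚ :=
  (f.coeff : FreeMonoid (Fin 2) →₀ ℚ) (FreeMonoid.ofList w)

def suppW (f : Ass2) : Finset (FreeMonoid (Fin 2)) :=
  (f.coeff : FreeMonoid (Fin 2) →₀ ℚ).support

def pushWord (w : List (Fin 2)) : List (Fin 2) :=
  if (1 : Fin 2) ∈ w then
    (w.reverse.takeWhile (· ≠ 1)).reverse ++ [1] ++ ((w.reverse.dropWhile (· ≠ 1)).tail).reverse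
  else w

def pushA (f : Ass2) : Ass2 :=
  MonoidAlgebra.ofCoeff (Finsupp.mapDomain (fun w => FreeMonoid.ofList (pushWord (FreeMonoid.toList w)))
    (f.coeff : FreeMonoid (Fin 2) →₀ ℚ))

def depthPart (r : ℕ) (f : Ass2) : Ass2 :=
  MonoidAlgebra.ofCoeff (Finsupp.filter (fun w => (FreeMonoid.toList w).count 1 = r) (f.coeff : FreeMonoid (Fin 2) →₀ ℚ))

def homogW (n : ℕ) (f : Ass2) : Prop := ∀ w ∈ suppW f, (FreeMonoid.toList w).length = n

def lie2 : LieSubalgebra ℚ Ass2 := LieSubalgebra.lieSpan ℚ Ass2 {Xg, Yg}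

def Cgen : ℕ → Ass2
  | 0 => Yg
  | i + 1 => ⁅Xg, Cgen i⁆

def lieC : LieSubalgebra ℚ Ass2 := LieSubalgebra.lieSpan ℚ Ass2 (Set.range Cgen)

/-- `rY f` is `f_y` : the part of `f` consisting of words ending in `y`, with that `y` removed. -/
def rY (f : Ass2) : Ass2 :=
  MonoidAlgebra.ofCoeff (Finsupp.comapDomain (fun w => w * FreeMonoid.of 1) (f.coeff : FreeMonoid (Fin 2) →₀ ℚ)
    (Set.injOn_of_injective (mul_left_injective (FreeMonoid.of 1))))

def rX (f : Ass2) : Ass2 :=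
  MonoidAlgebra.ofCoeff (Finsupp.comapDomain (fun w => w * FreeMonoid.of 0) (f.coeff : FreeMonoid (Fin 2) →₀ ℚ)
    (Set.injOn_of_injective (mul_left_injective (FreeMonoid.of 0))))

/-- `lY f` is `f^y`. -/
def lY (f : Ass2) : Ass2 :=
  MonoidAlgebra.ofCoeff (Finsupp.comapDomain (fun w => FreeMonoid.of 1 * w) (f.coeff : FreeMonoid (Fin 2) →₀ ℚ)
    (Set.injOn_of_injective (mul_right_injective (FreeMonoid.of 1))))

def lX (f : Ass2) : Ass2 :=
  MonoidAlgebra.ofCoeff (Finsupp.comapDomain (fun w => FreeMonoid.of 0 * w) (f.coeff : FreeMonoid (Fin 2) →₀ ℚ)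
    (Set.injOn_of_injective (mul_right_injective (FreeMonoid.of 0))))

/-- sum of all monomials of weight `n` and depth `r` -/
def allMon (n r : ℕ) : Ass2 :=
  ∑ g ∈ Finset.univ.filter (fun g : Fin n → Fin 2 => (List.ofFn g).count 1 = r),
    mono (List.ofFn g)

def PushNeutral (p : Ass2) : Prop :=
  ∀ r : ℕ, 1 ≤ r → ∑ i ∈ Finset.range (r + 1), pushA^[i] (depthPart r p) = 0

def CircNeutral (b : Ass2) : Prop :=
  ∀ r : ℕ, 1 < r → ∑ i ∈ Finset.range (r + 1), pushA^[i] (depthPart r (lY b)) = 0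

def PushConstant (p : Ass2) (n : ℕ) (c : ℚ) : Prop :=
  coeffW p (List.replicate n 1) = 0 ∧
    ∀ r : ℕ, 1 < r → r < n →
      ∑ i ∈ Finset.range (r + 1), pushA^[i] (depthPart r p) = c • allMon n r

def cycSub : Submodule ℚ Ass2 :=
  Submodule.span ℚ {p : Ass2 | ∃ (w : List (Fin 2)) (k : ℕ), p = mono w - mono (w.rotate k)}

abbrev Tr2 := Ass2 ⧸ cycSub

def trQ : Ass2 →ₗ[ℚ] Tr2 := cycSub.mkQ

def derFun (vx vy : Ass2) : List (Fin 2) → Ass2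
  | [] => 0
  | a :: w => (if a = 0 then vx else vy) * mono w + mono [a] * derFun vx vy w

/-- the derivation of `Ass2` with `x ↦ vx`, `y ↦ vy`, applied to `f`. -/
def der (vx vy : Ass2) (f : Ass2) : Ass2 :=
  Finsupp.sum (f.coeff : FreeMonoid (Fin 2) →₀ ℚ) (fun w c => c • derFun vx vy (FreeMonoid.toList w))

/-- the tangential derivation `E_{a,b}` with `x ↦ [x,a]`, `y ↦ [y,b]`. -/
def Eder (a b : Ass2) : Ass2 → Ass2 := der ⁅Xg, a⁆ ⁅Yg, b⁆

/-- the automorphism `ν` of `Ass2` with `ν(x) = −x−y`, `ν(y) = y`. -/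
def nuA : Ass2 → Ass2 :=
  MonoidAlgebra.lift ℚ Ass2 (FreeMonoid (Fin 2))
    (FreeMonoid.lift (fun i : Fin 2 => if i = 0 then (-Xg - Yg) else Yg))

/-- the Ihara derivation `d_c` : `x ↦ 0`, `y ↦ [y,c]`, applied to `f`. -/
def dIhara (c : Ass2) : Ass2 → Ass2 := der 0 ⁅Yg, c⁆

/-!
`ν` is an involutive algebra automorphism, so `ν ∘ E_{a,b} ∘ ν` is again a derivation, and a
derivation of the free algebra is determined by its values on `x` and `y`. On `y` it gives
`ν [y, b] = [y, ν b]`; on `x` it gives `ν (E_{a,b} (-x-y)) = -ν ([x,a] + [y,b]) = 0` by the special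
condition. Applying `ν` to `[x,a] + [y,b] = 0` gives `d_{ν b}(-x-y) = [-x-y, ν a]`, and conjugation
by an involution preserves composition, hence commutators.
-/

section Leibniz

variable {R A : Type*} [CommRing R] [Ring A] [Algebra R A]

/-- Mathlib's `Derivation` needs a commutative algebra; derivations of a noncommutative one are
linear maps with this property. -/
def IsLeibniz (D : A →ₗ[R] A) : Prop := ∀ f g, D (f * g) = D f * g + f * D g

lemma IsLeibniz.map_one {D : A →ₗ[R] A} (hD : IsLeibniz D) : D 1 = 0 := by
  simpa using hD 1 1

lemma IsLeibniz.ext_of_adjoin_eq_top {D₁ D₂ : A →ₗ[R] A} (h₁ : IsLeibniz D₁) (h₂ : IsLeibniz D₂)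
    {s : Set A} (hs : Algebra.adjoin R s = ⊤) (h : Set.EqOn D₁ D₂ s) : D₁ = D₂ := by
  ext f
  have hf : f ∈ Algebra.adjoin R s := hs ▸ Algebra.mem_top
  induction hf using Algebra.adjoin_induction with
  | mem x hx => exact h hx
  | algebraMap r => rw [Algebra.algebraMap_eq_smul_one, map_smul, map_smul, h₁.map_one, h₂.map_one]
  | add x y _ _ hx hy => rw [map_add, map_add, hx, hy]
  | mul x y _ _ hx hy => rw [h₁, h₂, hx, hy]

lemma IsLeibniz.conj {D : A →ₗ[R] A} (hD : IsLeibniz D) (φ ψ : A →ₐ[R] A)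
    (hφψ : ∀ f, φ (ψ f) = f) : IsLeibniz (φ.toLinearMap ∘ₗ D ∘ₗ ψ.toLinearMap) := by
  intro f g
  simp only [LinearMap.comp_apply, AlgHom.toLinearMap_apply]
  rw [map_mul, hD, map_add, map_mul, map_mul, hφψ, hφψ]

end Leibniz

lemma mono_nil : mono [] = 1 := rfl

lemma mono_append (u v : List (Fin 2)) : mono (u ++ v) = mono u * mono v := by
  simp [mono, MonoidAlgebra.single_mul_single]

lemma mono_cons (a : Fin 2) (u : List (Fin 2)) : mono (a :: u) = mono [a] * mono u :=
  mono_append [a] u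

lemma of_eq_mono (m : FreeMonoid (Fin 2)) :
    MonoidAlgebra.of ℚ (FreeMonoid (Fin 2)) m = mono (FreeMonoid.toList m) := by
  simp [MonoidAlgebra.of_apply, mono]

lemma adjoin_Xg_Yg : Algebra.adjoin ℚ {Xg, Yg} = ⊤ := by
  let e : FreeAlgebra ℚ (Fin 2) ≃ₐ[ℚ] Ass2 := FreeAlgebra.equivMonoidAlgebraFreeMonoid
  have hXY : ({Xg, Yg} : Set Ass2) = e.toAlgHom '' Set.range (FreeAlgebra.ι ℚ) := by
    rw [← Set.range_comp]
    ext
    simp [e, Fin.exists_fin_two, FreeAlgebra.equivMonoidAlgebraFreeMonoid, Xg, Yg, mono, eq_comm]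
  rw [hXY, Algebra.adjoin_image, FreeAlgebra.adjoin_range_ι, Algebra.map_top, AlgHom.range_eq_top]
  exact e.surjective

lemma derFun_append (vx vy : Ass2) (u v : List (Fin 2)) :
    derFun vx vy (u ++ v) = derFun vx vy u * mono v + mono u * derFun vx vy v := by
  induction u with
  | nil => simp [derFun, mono_nil]
  | cons a u ih =>
    rw [List.cons_append, derFun, derFun, ih, mono_append, mono_cons a u]
    noncomm_ring

def derLinearMap (vx vy : Ass2) : Ass2 →ₗ[ℚ] Ass2 where
  toFun := der vx vy
  map_add' f g := by
    unfold der
    rw [MonoidAlgebra.coeff_add]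
    exact Finsupp.sum_add_index' (by simp) (fun _ _ _ => add_smul _ _ _)
  map_smul' c f := by
    unfold der
    rw [MonoidAlgebra.coeff_smul, Finsupp.sum_smul_index (by simp), Finsupp.smul_sum]
    simp [mul_smul]

lemma derLinearMap_apply (vx vy f : Ass2) : derLinearMap vx vy f = der vx vy f := rfl

lemma der_mono (vx vy : Ass2) (w : List (Fin 2)) : der vx vy (mono w) = derFun vx vy w := by
  unfold der mono
  rw [MonoidAlgebra.coeff_single, Finsupp.sum_single_index (by simp)]
  simp

lemma derLinearMap_Xg (vx vy : Ass2) : derLinearMap vx vy Xg = vx := by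
  simp [derLinearMap_apply, Xg, der_mono, derFun, mono_nil]

lemma derLinearMap_Yg (vx vy : Ass2) : derLinearMap vx vy Yg = vy := by
  simp [derLinearMap_apply, Yg, der_mono, derFun, mono_nil]

lemma isLeibniz_derLinearMap (vx vy : Ass2) : IsLeibniz (derLinearMap vx vy) := by
  intro f g
  induction f using MonoidAlgebra.induction_on with
  | add f f' hf hf' => simp only [add_mul, map_add, hf, hf']; abel
  | smul c f hf => simp only [smul_mul_assoc, map_smul, hf, smul_add]
  | of u =>
    induction g using MonoidAlgebra.induction_on with
    | add g g' hg hg' => simp only [mul_add, map_add, hg, hg']; abel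
    | smul c g hg => simp only [mul_smul_comm, map_smul, hg, smul_add]
    | of v => simp only [of_eq_mono, ← mono_append, derLinearMap_apply, der_mono, derFun_append]

/-- Definitionally equal to `nuA`, so facts about `nuAlg` apply to `nuA` as stated. -/
def nuAlg : Ass2 →ₐ[ℚ] Ass2 :=
  MonoidAlgebra.lift ℚ Ass2 (FreeMonoid (Fin 2))
    (FreeMonoid.lift (fun i : Fin 2 => if i = 0 then (-Xg - Yg) else Yg))

lemma nuAlg_Xg : nuAlg Xg = -Xg - Yg := by
  simp [nuAlg, Xg, mono, MonoidAlgebra.lift_single]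

lemma nuAlg_Yg : nuAlg Yg = Yg := by
  simp [nuAlg, Yg, mono, MonoidAlgebra.lift_single]

lemma nuA_nuA (f : Ass2) : nuA (nuA f) = f := by
  have : nuAlg.comp nuAlg = AlgHom.id ℚ Ass2 := by
    refine AlgHom.ext_of_adjoin_eq_top adjoin_Xg_Yg ?_
    rintro _ (rfl | rfl)
    · simp [nuAlg_Xg, nuAlg_Yg]
    · simp [nuAlg_Yg]
  exact congr($this f)

lemma nuA_sub (f g : Ass2) : nuA (f - g) = nuA f - nuA g :=
  map_sub nuAlg f g

lemma nuAlg_lie (f g : Ass2) : nuAlg ⁅f, g⁆ = ⁅nuAlg f, nuAlg g⁆ :=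
  nuAlg.toLieHom.map_lie f g

lemma nuA_Eder_nuA {a b : Ass2} (hsp : ⁅Xg, a⁆ + ⁅Yg, b⁆ = 0) (f : Ass2) :
    nuA (Eder a b (nuA f)) = dIhara (nuA b) f := by
  have h : nuAlg.toLinearMap ∘ₗ derLinearMap ⁅Xg, a⁆ ⁅Yg, b⁆ ∘ₗ nuAlg.toLinearMap
      = derLinearMap 0 ⁅Yg, nuAlg b⁆ := by
    refine ((isLeibniz_derLinearMap _ _).conj nuAlg nuAlg nuA_nuA).ext_of_adjoin_eq_top
      (isLeibniz_derLinearMap _ _) adjoin_Xg_Yg ?_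
    rintro _ (rfl | rfl) <;> simp only [LinearMap.comp_apply, AlgHom.toLinearMap_apply]
    · rw [nuAlg_Xg, map_sub, map_neg, derLinearMap_Xg, derLinearMap_Yg, derLinearMap_Xg,
        ← neg_add', hsp, neg_zero, map_zero]
    · rw [nuAlg_Yg, derLinearMap_Yg, derLinearMap_Yg, nuAlg_lie, nuAlg_Yg]
  exact congr($h f)

lemma Eder_nuA {a b : Ass2} (hsp : ⁅Xg, a⁆ + ⁅Yg, b⁆ = 0) (f : Ass2) :
    Eder a b (nuA f) = nuA (dIhara (nuA b) f) := by
  rw [← nuA_Eder_nuA hsp, nuA_nuA]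

lemma dIhara_nuA_neg_Xg_sub_Yg {a b : Ass2} (hsp : ⁅Xg, a⁆ + ⁅Yg, b⁆ = 0) :
    dIhara (nuA b) (-Xg - Yg) = ⁅-Xg - Yg, nuA a⁆ := by
  have hνsp : ⁅nuAlg Xg, nuAlg a⁆ + ⁅nuAlg Yg, nuAlg b⁆ = 0 := by
    rw [← nuAlg_lie, ← nuAlg_lie, ← map_add, hsp, map_zero]
  rw [nuAlg_Xg, nuAlg_Yg] at hνsp
  rw [dIhara, ← derLinearMap_apply, map_sub, map_neg, derLinearMap_Xg, derLinearMap_Yg, neg_zero,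
    zero_sub]
  exact (eq_neg_of_add_eq_zero_left hνsp).symm

theorem conjugation_by_nu_general (a b : Ass2)
    (hsp : ⁅Xg, a⁆ + ⁅Yg, b⁆ = 0) :
    (∀ f : Ass2, nuA (Eder a b (nuA f)) = dIhara (nuA b) f) ∧
    dIhara (nuA b) (-Xg - Yg) = ⁅-Xg - Yg, nuA a⁆ ∧
    (∀ a' b' : Ass2, a' ∈ lie2 → b' ∈ lie2 → ⁅Xg, a'⁆ + ⁅Yg, b'⁆ = 0 →
      ∀ f : Ass2,
        nuA (Eder a b (Eder a' b' (nuA f)) - Eder a' b' (Eder a b (nuA f)))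
          = dIhara (nuA b) (dIhara (nuA b') f) - dIhara (nuA b') (dIhara (nuA b) f)) := by
  refine ⟨nuA_Eder_nuA hsp, dIhara_nuA_neg_Xg_sub_Yg hsp, ?_⟩
  intro a' b' _ _ hsp' f
  simp only [Eder_nuA hsp, Eder_nuA hsp', ← nuA_sub, nuA_nuA]

/-- **Statement 15** (Lemma 18 of the paper).  For `E_{a,b} ∈ sder_2`, conjugation by the
involution `ν` (`x ↦ −x−y`, `y ↦ y`) gives the Ihara derivation `d_{ν(b)}`, one has
`d_{ν(b)}(−x−y) = [−x−y, ν(a)]` (so `d_{ν(b)} ∈ ider_2`), and `E_{a,b} ↦ d_{ν(b)}`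
is an isomorphism of Lie algebras `sder_2 → ider_2`: it respects the commutator bracket. -/
theorem conjugation_by_nu (a b : Ass2) (ha : a ∈ lie2) (hb : b ∈ lie2)
    (hsp : ⁅Xg, a⁆ + ⁅Yg, b⁆ = 0) :
    (∀ f : Ass2, nuA (Eder a b (nuA f)) = dIhara (nuA b) f) ∧
    dIhara (nuA b) (-Xg - Yg) = ⁅-Xg - Yg, nuA a⁆ ∧
    (∀ a' b' : Ass2, a' ∈ lie2 → b' ∈ lie2 → ⁅Xg, a'⁆ + ⁅Yg, b'⁆ = 0 →
      ∀ f : Ass2,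
        nuA (Eder a b (Eder a' b' (nuA f)) - Eder a' b' (Eder a b (nuA f)))
          = dIhara (nuA b) (dIhara (nuA b') f) - dIhara (nuA b') (dIhara (nuA b) f)) :=
  conjugation_by_nu_general a b hsp
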